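/- arXiv:2106.00806 — 4 statements merged into one kernel-verified Lean document; each statement's English description precedes it below -/
import Mathlib

section
/- The Fux dichotomy (K/D) = ({0,3,4,7,8,9}/{1,2,5,6,10,11}) is rigid: the only affine automorphism g = T^t.u of Z_12 with g(K) = K is the identity. -/
/-- The Fux consonance set K ⊂ ℤ₁₂. -/
def FuxK : Set (ZMod 12) := {0,3,4,7,8,9}

lemma fux_mem (x : ZMod 12) : x ∈ FuxK ↔ (x = 0 ∨ x = 3 ∨ x = 4 ∨ x = 7 ∨ x = 8 ∨ x = 9) := by
  simp [FuxK]

/-- The Fux dichotomy is rigid: the only affine automorphism g = Tᵗ.u of ℤ₁₂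
with g(K) = K is the identity. -/
theorem fux_rigid :
    ∀ u t : ZMod 12, IsUnit u →
      (fun x => u * x + t) '' FuxK = FuxK → u = 1 ∧ t = 0 := by
  intro u t hu h
  have h' : ∀ x : ZMod 12, (∃ y : ZMod 12, (y = 0 ∨ y = 3 ∨ y = 4 ∨ y = 7 ∨ y = 8 ∨ y = 9) ∧ u * y + t = x) ↔ (x = 0 ∨ x = 3 ∨ x = 4 ∨ x = 7 ∨ x = 8 ∨ x = 9) := by
    intro x
    rw [← fux_mem, ← h]
    simp [Set.mem_image, fux_mem]
  clear hu h
  revert h'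
  revert u t
  decide
end

section
/- The Fux dichotomy (K/D) with K = {0,3,4,7,8,9} is strong: it is rigid, and the affine automorphism p = T^2.5 satisfies p(K) = D = Z_12 \ K. -/
/-- The Fux dichotomy (K/D) is strong: it is rigid, and the affine automorphism
p = T².5 : x ↦ 5x + 2 satisfies p(K) = D = ℤ₁₂ \ K. -/
theorem fux_strong :
    (∀ u t : ZMod 12, IsUnit u →
      (fun x => u * x + t) '' FuxK = FuxK → u = 1 ∧ t = 0) ∧
    IsUnit (5 : ZMod 12) ∧
    (fun x : ZMod 12 => 5 * x + 2) '' FuxK = FuxKᶜ := by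
  refine ⟨?_, ⟨⟨5, 5, by decide, by decide⟩, rfl⟩, ?_⟩
  · intro u t hu h
    clear hu
    rw [Set.ext_iff] at h
    simp only [Set.mem_image, FuxK, Set.mem_insert_iff, Set.mem_singleton_iff] at h
    revert h; revert u t; decide
  · ext y
    simp only [Set.mem_image, Set.mem_compl_iff, FuxK, Set.mem_insert_iff,
      Set.mem_singleton_iff]
    revert y; decide
end

section
/- No affine automorphism of Z_12 maps the Fux consonance set K = {0,3,4,7,8,9} onto the Ionian consonance set I = {2,4,5,7,9,11}; hence the Fux and Ionian dichotomies lie in distinct affine orbits. -/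
def IonianI : Set (ZMod 12) := {2,4,5,7,9,11}

/-- No affine automorphism of ℤ₁₂ maps the Fux consonance set K onto the
Ionian consonance set I; the two dichotomies lie in distinct affine orbits. -/
theorem fux_ionian_distinct_orbits :
    ∀ u t : ZMod 12, IsUnit u → (fun x => u * x + t) '' FuxK ≠ IonianI := by
  intro u t hu h
  rw [Set.ext_iff] at h
  simp only [Set.mem_image, FuxK, IonianI, Set.mem_insert_iff, Set.mem_singleton_iff] at h
  revert h hu
  revert u t
  decide
end

section
/- For each n ≥ 1, the map p_n = T^{2^{n−1}}.(4^{⌈n/2⌉}+1) on Z_{2^n·3}, i.e., x ↦ (4^{⌈n/2⌉}+1)·x + 2^{n−1} mod 2^n·3, is an involution: p_n ∘ p_n = id. -/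
/-- For each n ≥ 1, the affine map pₙ = T^{2^{n−1}}.(4^{⌈n/2⌉}+1) on
ℤ_{2ⁿ·3}, x ↦ (4^{⌈n/2⌉}+1)·x + 2^{n−1}, is an involution. -/
theorem pn_involutive (n : ℕ) (hn : 1 ≤ n) (x : ZMod (2 ^ n * 3)) :
    (4 ^ ((n + 1) / 2) + 1) *
        ((4 ^ ((n + 1) / 2) + 1) * x + 2 ^ (n - 1)) + 2 ^ (n - 1) = x := by
  set k := (n + 1) / 2 with hk
  have h2k : n ≤ 2 * k := by omega
  have hdvd2 : (2 : ℕ) ^ n ∣ 4 ^ k := by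
    have : (4 : ℕ) ^ k = 2 ^ (2 * k) := by
      rw [pow_mul]; norm_num
    rw [this]
    exact pow_dvd_pow 2 h2k
  have hdvd3 : (3 : ℕ) ∣ 4 ^ k + 2 := by
    have : (4 : ℕ) ^ k % 3 = 1 := by
      have : (4 : ℕ) ^ k % 3 = (4 % 3) ^ k % 3 := by
        rw [Nat.pow_mod]
      simpa using this
    omega
  have hcop : Nat.Coprime (2 ^ n) 3 := by
    exact Nat.Coprime.pow_left n (by norm_num)
  have hA : (2 ^ n * 3 : ℕ) ∣ 4 ^ k * (4 ^ k + 2) :=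
    Nat.Coprime.mul_dvd_of_dvd_of_dvd hcop (hdvd2.mul_right _) (hdvd3.mul_left _)
  have hdvd2' : (2 : ℕ) ^ n ∣ 2 ^ (n - 1) * (4 ^ k + 2) := by
    have h2 : (2 : ℕ) ∣ 4 ^ k + 2 := by
      have : (2 : ℕ) ∣ 4 ^ k := dvd_pow (by norm_num) (by omega)
      omega
    calc (2 : ℕ) ^ n = 2 ^ (n - 1) * 2 := by
          rw [← pow_succ]; congr 1; omega
      _ ∣ 2 ^ (n - 1) * (4 ^ k + 2) := mul_dvd_mul_left _ h2
  have hB : (2 ^ n * 3 : ℕ) ∣ 2 ^ (n - 1) * (4 ^ k + 2) :=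
    Nat.Coprime.mul_dvd_of_dvd_of_dvd hcop hdvd2' (hdvd3.mul_left _)
  have hA' : ((4 ^ k * (4 ^ k + 2) : ℕ) : ZMod (2 ^ n * 3)) = 0 :=
    (ZMod.natCast_eq_zero_iff _ _).mpr hA
  have hB' : ((2 ^ (n - 1) * (4 ^ k + 2) : ℕ) : ZMod (2 ^ n * 3)) = 0 :=
    (ZMod.natCast_eq_zero_iff _ _).mpr hB
  push_cast at hA' hB'
  linear_combination (hA' * x) + hB'
end
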